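/- Let m = 808017424794512875886459904961710757005754368000000000 (the order of the Monster group). For every divisor d of 70·7^5, set x = 71·d. Then x divides m, and m/x ≡ 1 (mod 71) holds if and only if x = 2485. -/

import Mathlib

/-!
Write m = 71 n, where n ≡ 35 (mod 71). Since d is prime to 71, n / d ≡ 1 (mod 71) exactly when
n ≡ d, i.e. d ≡ 35 (mod 71); among the 28 divisors 2^a 5^b 7^c of 70 · 7^5 only d = 35 qualifies.
-/

theorem Nat.div_modEq_one_iff_modEq {n d p : ℕ} (hd : d ∣ n) (hcop : Nat.Coprime d p) :
    n / d ≡ 1 [MOD p] ↔ n ≡ d [MOD p] := by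
  obtain ⟨q, rfl⟩ := hd
  rcases d.eq_zero_or_pos with rfl | hpos
  · obtain rfl : p = 1 := Nat.coprime_zero_left p |>.mp hcop
    simp [Nat.modEq_one]
  rw [Nat.mul_div_cancel_left q hpos]
  constructor
  · intro h
    simpa using h.mul_left d
  · intro h
    exact Nat.ModEq.cancel_left_of_coprime (c := d) hcop.symm (by simpa using h)

theorem eq_thirtyFive_of_dvd_of_mod_seventyOne {d : ℕ} (hd : d ∣ 70 * 7 ^ 5) (h : d % 71 = 35) :
    d = 35 := by
  obtain ⟨a, b, ha, hb, rfl⟩ := exists_dvd_and_dvd_of_dvd_mul hd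
  obtain ⟨i, hi, rfl⟩ := (Nat.dvd_prime_pow (by norm_num)).mp hb
  have ha' : a ∈ Nat.divisors 70 := Nat.mem_divisors.mpr ⟨ha, by norm_num⟩
  rw [show Nat.divisors 70 = {1, 2, 5, 7, 10, 14, 35, 70} by decide] at ha'
  simp only [Finset.mem_insert, Finset.mem_singleton] at ha'
  interval_cases i <;> rcases ha' with rfl | rfl | rfl | rfl | rfl | rfl | rfl | rfl <;> omega

/-- Sylow-counting step for the normalizer of a cyclic subgroup of order 71
in the Monster group. -/
theorem stmt_9 (d : ℕ) (hd : d ∣ 70 * 7 ^ 5) :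
    let m : ℕ := 808017424794512875886459904961710757005754368000000000
    let x : ℕ := 71 * d
    (x ∣ m) ∧ ((m / x) % 71 = 1 ↔ x = 2485) := by
  intro m x
  have hdvd : d ∣ m / 71 := hd.trans (by norm_num [m])
  have hcop : Nat.Coprime d 71 := Nat.Coprime.coprime_dvd_left hd (by norm_num)
  refine ⟨(Nat.mul_dvd_mul_left 71 hdvd).trans (by norm_num [m]), ?_⟩
  rw [← Nat.div_div_eq_div_mul]
  change m / 71 / d ≡ 1 [MOD 71] ↔ _
  rw [Nat.div_modEq_one_iff_modEq hdvd hcop, Nat.ModEq, show m / 71 % 71 = 35 by norm_num [m]]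
  exact ⟨fun h => by have := eq_thirtyFive_of_dvd_of_mod_seventyOne hd h.symm; omega,
    fun h => by omega⟩
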